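/- arXiv:0910.4789 — 2 statements merged into one kernel-verified Lean document; each statement's English description precedes it below -/
import Mathlib

section
/- Suppose x, y, z are vertices of the finite simplicial graph Γ such that x is not adjacent to y, lk(x) separates y from z (i.e. y and z lie in different connected components of the induced subgraph on the complement of lk(x)), and lk(y) separates x from z. Then lk(x) ∩ lk(y) separates both x and y from z (i.e. the connected component of z in the induced subgraph on the complement of lk(x) ∩ lk(y) contains neither x nor y); in particular, Γ contains a separating intersection of links. -/
open SimpleGraph

variable {V : Type*}

/-- The link of a vertex: the set of adjacent vertices. -/
def lk (G : SimpleGraph V) (x : V) : Set V := {z | G.Adj x z}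

/-- The star of a vertex: the link together with the vertex itself. -/
def st (G : SimpleGraph V) (x : V) : Set V := insert x (lk G x)

/-- `Dominates G y x` means `y ≥ x`, i.e. `lk x ⊆ st y`. -/
def Dominates (G : SimpleGraph V) (y x : V) : Prop := lk G x ⊆ st G y

/-- `Γ` contains a domination-equivalent pair of (distinct) vertices. -/
def DomEquivPair (G : SimpleGraph V) : Prop :=
  ∃ x y : V, x ≠ y ∧ Dominates G x y ∧ Dominates G y x

/-- `S` separates `u` from `v`: both lie outside `S` and they are not joined by a path
in the induced subgraph on the complement of `S`. -/
def SeparatesFrom (G : SimpleGraph V) (S : Set V) (u v : V) : Prop :=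
  ∃ (hu : u ∈ Sᶜ) (hv : v ∈ Sᶜ),
    ¬ (G.induce Sᶜ).Reachable ⟨u, hu⟩ ⟨v, hv⟩

/-- `Γ` has a separating intersection of links: there are distinct non-adjacent vertices
`x, y` and a vertex `z` whose connected component in the induced subgraph on the
complement of `lk x ∩ lk y` contains neither `x` nor `y`. -/
def SepIntLinks (G : SimpleGraph V) : Prop :=
  ∃ x y : V, x ≠ y ∧ ¬ G.Adj x y ∧ ∃ z : V,
    SeparatesFrom G (lk G x ∩ lk G y) z x ∧ SeparatesFrom G (lk G x ∩ lk G y) z y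

/-- `Y` is the vertex set of a connected component of the induced subgraph on `S`. -/
def IsCompOf (G : SimpleGraph V) (S : Set V) (Y : Set V) : Prop :=
  Y.Nonempty ∧ Y ⊆ S ∧
    ∀ a : S, a.1 ∈ Y → ∀ b : S, ((G.induce S).Reachable a b ↔ b.1 ∈ Y)

open scoped commutatorElement in
/-- The defining relators of the right-angled Artin group of `G`. -/
def raagRels (G : SimpleGraph V) : Set (FreeGroup V) :=
  {r | ∃ x y : V, G.Adj x y ∧ r = ⁅FreeGroup.of x, FreeGroup.of y⁆}

/-- The right-angled Artin group of a graph. -/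
abbrev RAAG (G : SimpleGraph V) : Type _ := PresentedGroup (raagRels G)

/-- The generator of the RAAG corresponding to a vertex. -/
def gen (G : SimpleGraph V) (x : V) : RAAG G := PresentedGroup.of x

/-- The subgroup of inner automorphisms. -/
def Inn (H : Type*) [Group H] : Subgroup (MulAut H) := (MulAut.conj : H →* MulAut H).range

instance Inn.normal (H : Type*) [Group H] : (Inn H).Normal := by
  constructor
  intro n hn g
  obtain ⟨h, rfl⟩ := hn
  refine ⟨g h, ?_⟩
  ext x
  simp [MulAut.conj]

/-- The outer automorphism group `Out(A_Γ)` of the RAAG of `G`. -/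
abbrev OutG (G : SimpleGraph V) := MulAut (RAAG G) ⧸ Inn (RAAG G)

/-- A group contains a subgroup isomorphic to the free group of rank 2. -/
def HasFreeRankTwo (H : Type*) [Group H] : Prop :=
  ∃ K : Subgroup H, Nonempty (↥K ≃* FreeGroup (Fin 2))

/-- A group is virtually nilpotent. -/
def VirtNilpotent (H : Type*) [Group H] : Prop :=
  ∃ K : Subgroup H, K.FiniteIndex ∧ Group.IsNilpotent ↥K

/-- `φ` is a transvection with multiplier `x^ε` acting on the generator `y`
(either a right or a left transvection). -/
def IsTransvection (G : SimpleGraph V) (φ : MulAut (RAAG G)) (x y : V) (ε : ℤ) : Prop :=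
  x ≠ y ∧ Dominates G x y ∧ (ε = 1 ∨ ε = -1) ∧
  (φ (gen G y) = gen G y * (gen G x) ^ ε ∨ φ (gen G y) = (gen G x) ^ ε * gen G y) ∧
  ∀ z : V, z ≠ y → φ (gen G z) = gen G z

/-- `φ` is a non-inner partial conjugation with multiplier `x^ε`, conjugating exactly the
generators in the connected component `Y` of the complement of `st x`. -/
def IsPartialConj (G : SimpleGraph V) (φ : MulAut (RAAG G)) (x : V) (ε : ℤ) (Y : Set V) : Prop :=
  (ε = 1 ∨ ε = -1) ∧ IsCompOf G ((st G x)ᶜ) Y ∧ ((st G x ∪ Y)ᶜ).Nonempty ∧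
  (∀ y ∈ Y, φ (gen G y) = (gen G x) ^ (-ε) * gen G y * (gen G x) ^ ε) ∧
  ∀ z : V, z ∉ Y → φ (gen G z) = gen G z

/-- A domination chain, listed with the dominant member first. -/
def IsDomChain (G : SimpleGraph V) (l : List V) : Prop :=
  l ≠ [] ∧ l.Nodup ∧ l.Chain' (fun a b => Dominates G a b)

/-- The domination depth of a vertex: the maximal length of a domination chain with
top member `x`. -/
noncomputable def domDepth (G : SimpleGraph V) (x : V) : ℕ :=
  sSup {n | ∃ l : List V, IsDomChain G l ∧ l.head? = some x ∧ l.length = n + 1}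

/-- A star-separation preserving domination chain with top member `xm` and
bottom member `x1`. -/
def IsSSPChain (G : SimpleGraph V) (l : List V) (xm x1 : V) : Prop :=
  IsDomChain G l ∧ l.head? = some xm ∧ l.getLast? = some x1 ∧
  ∃ Y1 Y2 : Set V, IsCompOf G ((st G x1)ᶜ) Y1 ∧ IsCompOf G ((st G x1)ᶜ) Y2 ∧
    Y1 ≠ Y2 ∧ ¬ Y1 ⊆ st G xm ∧ ¬ Y2 ⊆ st G xm

/-- The star-separation depth of a vertex: `1 +` the maximal length of a star-separation
preserving chain with top member `x` (this is `0` if there is no such chain, as then the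
set below is empty). -/
noncomputable def ssDepth (G : SimpleGraph V) (x : V) : ℕ :=
  sSup {n | ∃ (l : List V) (x1 : V), IsSSPChain G l x x1 ∧ l.length = n}

/-- The depth of a vertex. -/
noncomputable def vdepth (G : SimpleGraph V) (x : V) : ℕ := max (domDepth G x) (ssDepth G x)

/-- The depth of the graph `G`. -/
noncomputable def gdepth (G : SimpleGraph V) : ℕ := sSup {n | ∃ x : V, n = vdepth G x}

/-- The set of images in `Out(A_Γ)` of all transvections and all non-inner partial
conjugations. -/
def TvPcSet (G : SimpleGraph V) : Set (OutG G) :=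
  {g | ∃ φ : MulAut (RAAG G), (QuotientGroup.mk φ : OutG G) = g ∧
    ((∃ x y ε, IsTransvection G φ x y ε) ∨ (∃ x ε Y, IsPartialConj G φ x ε Y))}

/-- The subgroup `N` of `Out(A_Γ)` generated by the images of all transvections and
all non-inner partial conjugations. -/
def Ngrp (G : SimpleGraph V) : Subgroup (OutG G) := Subgroup.closure (TvPcSet G)

/-!
Let `K_x` and `K_y` be the components of `z` in the complements of `lk x` and `lk y`.
Since `x ∉ lk y` lies outside `K_y`, no vertex of `K_y` is adjacent to `x`, i.e. `K_y` misses
`lk x`; symmetrically `K_x` misses `lk y`. A walk from `z` avoiding `lk x ∩ lk y` therefore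
never enters `lk x ∪ lk y`: leaving `K_x` through a vertex of `lk x \ lk y` would enter `K_y`
at a vertex of `lk x`. So the component of `z` avoiding `lk x ∩ lk y` lies in `K_x ∩ K_y`,
which contains neither `y` nor `x`.
-/

namespace SimpleGraph

def ReachableIn (G : SimpleGraph V) (s : Set V) (u v : V) : Prop :=
  ∃ (hu : u ∈ s) (hv : v ∈ s), (G.induce s).Reachable ⟨u, hu⟩ ⟨v, hv⟩

namespace ReachableIn

variable {G : SimpleGraph V} {s : Set V} {u v w : V}

theorem refl (hu : u ∈ s) : G.ReachableIn s u u := ⟨hu, hu, .refl _⟩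

theorem symm (h : G.ReachableIn s u v) : G.ReachableIn s v u :=
  let ⟨hu, hv, r⟩ := h
  ⟨hv, hu, r.symm⟩

theorem step (h : G.ReachableIn s u v) (hvw : G.Adj v w) (hw : w ∈ s) :
    G.ReachableIn s u w :=
  let ⟨hu, hv, r⟩ := h
  ⟨hu, hw, r.trans (Adj.reachable (show (G.induce s).Adj ⟨v, hv⟩ ⟨w, hw⟩ from hvw))⟩

theorem induction_on {P : V → Prop} (h : G.ReachableIn s u v) (hu : P u)
    (hstep : ∀ a b, P a → G.Adj a b → b ∈ s → P b) : P v := by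
  obtain ⟨hu', hv, r⟩ := h
  suffices ∀ b : s, (G.induce s).Reachable ⟨u, hu'⟩ b → P b from this ⟨v, hv⟩ r
  intro b hb
  rw [reachable_iff_reflTransGen] at hb
  induction hb with
  | refl => exact hu
  | tail _ hab ih => exact hstep _ _ ih hab (Subtype.prop _)

theorem of_compl_inter {A B : Set V} {z : V}
    (hA : ∀ v, G.ReachableIn Aᶜ z v → v ∉ B) (hB : ∀ v, G.ReachableIn Bᶜ z v → v ∉ A)
    (hzA : z ∉ A) (h : G.ReachableIn (A ∩ B)ᶜ z w) :
    G.ReachableIn Aᶜ z w ∧ G.ReachableIn Bᶜ z w := by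
  have hzB : z ∉ B := hA z (.refl hzA)
  refine h.induction_on (P := fun v => G.ReachableIn Aᶜ z v ∧ G.ReachableIn Bᶜ z v)
    ⟨.refl hzA, .refl hzB⟩ fun _ b ⟨ha, hb⟩ hab hbAB => ?_
  by_cases hbA : b ∈ A
  · have hbB : b ∉ B := fun hbB => hbAB ⟨hbA, hbB⟩
    exact absurd hbA (hB b (hb.step hab hbB))
  · have hbA' : G.ReachableIn Aᶜ z b := ha.step hab hbA
    exact ⟨hbA', hb.step hab (hA b hbA')⟩

theorem notMem_lk {z x : V} (hx : x ∉ s) (hzx : ¬ G.ReachableIn sᶜ z x)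
    (hv : G.ReachableIn sᶜ z v) : v ∉ lk G x :=
  fun hxv => hzx (hv.step hxv.symm hx)

end ReachableIn

end SimpleGraph

section SeparatesFrom

variable {G : SimpleGraph V} {S : Set V} {u v : V}

theorem separatesFrom_iff_not_reachableIn :
    SeparatesFrom G S u v ↔ u ∉ S ∧ v ∉ S ∧ ¬ G.ReachableIn Sᶜ u v :=
  ⟨fun ⟨hu, hv, h⟩ => ⟨hu, hv, fun ⟨_, _, r⟩ => h r⟩,
    fun ⟨hu, hv, h⟩ => ⟨hu, hv, fun r => h ⟨hu, hv, r⟩⟩⟩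

theorem SeparatesFrom.symm (h : SeparatesFrom G S u v) : SeparatesFrom G S v u :=
  let ⟨hu, hv, r⟩ := h
  ⟨hv, hu, fun r' => r r'.symm⟩

end SeparatesFrom

theorem sepIntLinks_of_links_separate_general (G : SimpleGraph V) (x y z : V)
    (hxy : x ≠ y)
    (h1 : SeparatesFrom G (lk G x) y z) (h2 : SeparatesFrom G (lk G y) x z) :
    (SeparatesFrom G (lk G x ∩ lk G y) z x ∧ SeparatesFrom G (lk G x ∩ lk G y) z y) ∧
      SepIntLinks G := by
  obtain ⟨hz, hy, hzy⟩ := separatesFrom_iff_not_reachableIn.1 h1.symm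
  obtain ⟨-, hx, hzx⟩ := separatesFrom_iff_not_reachableIn.1 h2.symm
  have hcomp : ∀ w, G.ReachableIn (lk G x ∩ lk G y)ᶜ z w →
      G.ReachableIn (lk G x)ᶜ z w ∧ G.ReachableIn (lk G y)ᶜ z w := fun _ =>
    ReachableIn.of_compl_inter (fun _ => ReachableIn.notMem_lk hy hzy)
      (fun _ => ReachableIn.notMem_lk hx hzx) hz
  have hzS : z ∉ lk G x ∩ lk G y := fun h => hz h.1
  have sepx : SeparatesFrom G (lk G x ∩ lk G y) z x :=
    separatesFrom_iff_not_reachableIn.2 ⟨hzS, fun h => hx h.2, fun h => hzx (hcomp x h).2⟩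
  have sepy : SeparatesFrom G (lk G x ∩ lk G y) z y :=
    separatesFrom_iff_not_reachableIn.2 ⟨hzS, fun h => hy h.1, fun h => hzy (hcomp y h).1⟩
  exact ⟨⟨sepx, sepy⟩, x, y, hxy, hy, z, sepx, sepy⟩

/-- If `x` is not adjacent to `y`, `lk x` separates `y` from `z` and
`lk y` separates `x` from `z`, then `lk x ∩ lk y` separates both `x` and `y` from `z`;
in particular `Γ` contains a separating intersection of links. -/
theorem sepIntLinks_of_links_separate [Fintype V] (G : SimpleGraph V) (x y z : V)
    (hxy : x ≠ y) (hadj : ¬ G.Adj x y)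
    (h1 : SeparatesFrom G (lk G x) y z) (h2 : SeparatesFrom G (lk G y) x z) :
    (SeparatesFrom G (lk G x ∩ lk G y) z x ∧ SeparatesFrom G (lk G x ∩ lk G y) z y) ∧
      SepIntLinks G :=
  sepIntLinks_of_links_separate_general G x y z hxy h1 h2
end

section
/- For k ≥ 1, let Γ_k be the finite simplicial graph with 2k+2 vertices x_0, …, x_k, y_0, …, y_k, where the vertices x_0, …, x_k span a complete graph, the vertices y_0, …, y_k span a complete graph, x_i is adjacent to y_j if and only if i + j > k, and there are no other edges. Then Γ_k contains no domination-equivalent pair of vertices, Γ_k contains no separating intersection of links, and depth(Γ_k) = k (indeed depth(x_i) = depth(y_i) = i for each i = 0, …, k). -/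
open SimpleGraph

variable {V : Type*}

/-- The graph `Γ_k`: vertices `x_0, …, x_k` (left) and `y_0, …, y_k` (right); the `x_i`
span a complete graph, the `y_j` span a complete graph, and `x_i` is adjacent to `y_j`
if and only if `i + j > k`. -/
def Gk (k : ℕ) : SimpleGraph (Fin (k + 1) ⊕ Fin (k + 1)) :=
  SimpleGraph.fromRel (fun a b =>
    match a, b with
    | Sum.inl _, Sum.inl _ => True
    | Sum.inr _, Sum.inr _ => True
    | Sum.inl i, Sum.inr j => (i : ℕ) + (j : ℕ) > k
    | Sum.inr i, Sum.inl j => (j : ℕ) + (i : ℕ) > k)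

/-! The index `i` of `x_i` and `y_i` strictly decreases along domination: if `a ≠ b` and
`gkIndex a ≤ gkIndex b`, some neighbour of `b` lies outside `st a`. The chain
`x_i ≥ x_{i-1} ≥ ⋯ ≥ x_0` shows that the domination depth of `x_i` is exactly `i`, and the rank
also rules out domination-equivalent pairs. Since `Γ_k` is covered by the two cliques
`{x_i}` and `{y_j}`, it has no independent triple, so no separating intersection of links, and
the complement of every star is a clique, hence a single component, so no chain is
star-separation preserving. -/

section

variable {G : SimpleGraph V}

theorem List.length_le_of_nodup_of_isChain {α : Type*} {R : α → α → Prop} (r : α → ℕ)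
    (hr : ∀ a b, R a b → a ≠ b → r b < r a) :
    ∀ {l : List α} {x : α}, l.Nodup → l.IsChain R → l.head? = some x → l.length ≤ r x + 1
  | [], _, _, _, _ => by simp
  | [_], _, _, _, _ => by simp
  | a :: b :: t, x, hnd, hc, hx => by
    obtain ⟨hab, hc⟩ := List.isChain_cons_cons.mp hc
    have hne : a ≠ b := fun e => (List.nodup_cons.mp hnd).1 (e ▸ List.mem_cons_self)
    have ih := length_le_of_nodup_of_isChain r hr hnd.of_cons hc rfl
    obtain rfl : a = x := Option.some.inj hx
    have := hr a b hab hne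
    simp only [List.length_cons] at ih ⊢
    omega

theorem domDepth_eq_of_rank (r : V → ℕ) (hr : ∀ a b, Dominates G a b → a ≠ b → r b < r a)
    {x : V} (hx : ∃ l, IsDomChain G l ∧ l.head? = some x ∧ l.length = r x + 1) :
    domDepth G x = r x := by
  refine IsGreatest.csSup_eq ⟨hx, ?_⟩
  rintro n ⟨l, ⟨-, hnd, hc⟩, hl, hlen⟩
  have := List.length_le_of_nodup_of_isChain r hr hnd hc hl
  omega

theorem not_domEquivPair_of_rank (r : V → ℕ)
    (hr : ∀ a b, Dominates G a b → a ≠ b → r b < r a) : ¬ DomEquivPair G :=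
  fun ⟨x, y, hne, hxy, hyx⟩ => lt_asymm (hr x y hxy hne) (hr y x hyx hne.symm)

theorem isDomChain_map_range {f : ℕ → V} {n : ℕ} (hf : Set.InjOn f (Set.Iic n))
    (hdom : ∀ t < n, Dominates G (f (t + 1)) (f t)) :
    IsDomChain G ((List.range (n + 1)).reverse.map f) := by
  refine ⟨by simp, (List.nodup_reverse.mpr List.nodup_range).map_on ?_, ?_⟩
  · intro s hs t ht hst
    simp only [List.mem_reverse, List.mem_range] at hs ht
    exact hf (Set.mem_Iic.mpr (by omega)) (Set.mem_Iic.mpr (by omega)) hst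
  · exact (List.isChain_map f).mpr <| List.isChain_reverse.mpr <|
      (List.isChain_range_succ _ n).mpr hdom

theorem IsCompOf.eq_of_isClique {S Y : Set V} (hY : IsCompOf G S Y) (hS : G.IsClique S) :
    Y = S := by
  obtain ⟨⟨a, haY⟩, hYS, hcomp⟩ := hY
  refine hYS.antisymm fun b hb => (hcomp ⟨a, hYS haY⟩ haY ⟨b, hb⟩).mp ?_
  by_cases hab : a = b
  · subst hab; rfl
  · exact Adj.reachable (by simpa using hS (hYS haY) hb hab)

theorem ssDepth_eq_zero_of_isClique_compl_st (h : ∀ v, G.IsClique (st G v)ᶜ) (x : V) :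
    ssDepth G x = 0 := by
  have : {n | ∃ (l : List V) (x₁ : V), IsSSPChain G l x x₁ ∧ l.length = n} = ∅ := by
    refine Set.eq_empty_of_forall_notMem ?_
    rintro n ⟨l, x₁, ⟨-, -, -, Y₁, Y₂, h₁, h₂, hne, -⟩, -⟩
    exact hne ((h₁.eq_of_isClique (h x₁)).trans (h₂.eq_of_isClique (h x₁)).symm)
  rw [ssDepth, this, csSup_empty]
  rfl

theorem Dominates.eq_or_adj {a b c : V} (h : Dominates G a b) (hc : G.Adj b c) :
    c = a ∨ G.Adj a c :=
  h hc

theorem SeparatesFrom.compl_adj {S : Set V} {u v : V} (h : SeparatesFrom G S u v) :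
    Gᶜ.Adj u v := by
  obtain ⟨hu, hv, hnr⟩ := h
  refine ⟨fun e => hnr (by subst e; rfl), fun hadj => hnr (Adj.reachable ?_)⟩
  simpa using hadj

theorem not_sepIntLinks_of_cliqueFree_compl (h : Gᶜ.CliqueFree 3) : ¬ SepIntLinks G := by
  classical
  rintro ⟨x, y, hxy, hnadj, z, hzx, hzy⟩
  exact h {x, y, z} (is3Clique_triple_iff.mpr
    ⟨⟨hxy, hnadj⟩, hzx.compl_adj.symm, hzy.compl_adj.symm⟩)

end

section Gk

variable {k : ℕ}

@[simp] theorem gk_adj_inl_inl {i j : Fin (k + 1)} : (Gk k).Adj (.inl i) (.inl j) ↔ i ≠ j := by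
  simp [Gk]

@[simp] theorem gk_adj_inr_inr {i j : Fin (k + 1)} : (Gk k).Adj (.inr i) (.inr j) ↔ i ≠ j := by
  simp [Gk]

@[simp] theorem gk_adj_inl_inr {i j : Fin (k + 1)} :
    (Gk k).Adj (.inl i) (.inr j) ↔ k < i + j := by
  simp [Gk]

@[simp] theorem gk_adj_inr_inl {i j : Fin (k + 1)} :
    (Gk k).Adj (.inr i) (.inl j) ↔ k < i + j := by
  simp [Gk]; omega

def gkIndex : Fin (k + 1) ⊕ Fin (k + 1) → ℕ := Sum.elim Fin.val Fin.val

theorem gk_eq_or_adj_of_isLeft_eq {a b : Fin (k + 1) ⊕ Fin (k + 1)} (h : a.isLeft = b.isLeft) :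
    a = b ∨ (Gk k).Adj a b := by
  rcases a with i | i <;> rcases b with j | j <;> simp_all [eq_or_ne]

theorem gk_cliqueFree_compl : (Gk k)ᶜ.CliqueFree 3 := by
  intro s hs
  obtain ⟨a, b, c, hab, hac, hbc, -⟩ := is3Clique_iff.mp hs
  have key : ∀ {u v}, (Gk k)ᶜ.Adj u v → u.isLeft ≠ v.isLeft := fun huv h =>
    (gk_eq_or_adj_of_isLeft_eq h).elim huv.1 huv.2
  have pigeonhole : ∀ p q r : Bool, p ≠ q → p ≠ r → q ≠ r → False := by decide
  exact pigeonhole _ _ _ (key hab) (key hac) (key hbc)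

theorem gk_isClique_compl_st (v : Fin (k + 1) ⊕ Fin (k + 1)) :
    (Gk k).IsClique (st (Gk k) v)ᶜ := by
  have key : ∀ {u}, u ∉ st (Gk k) v → u.isLeft ≠ v.isLeft := fun hu h =>
    hu ((gk_eq_or_adj_of_isLeft_eq h).imp id (·.symm))
  intro a ha b hb hab
  refine (gk_eq_or_adj_of_isLeft_eq ?_).resolve_left hab
  have pigeonhole : ∀ p q r : Bool, p ≠ r → q ≠ r → p = q := by decide
  exact pigeonhole _ _ _ (key ha) (key hb)

theorem gk_dominates_of_isLeft_eq {a b : Fin (k + 1) ⊕ Fin (k + 1)} (h : a.isLeft = b.isLeft)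
    (hab : gkIndex b ≤ gkIndex a) : Dominates (Gk k) a b := by
  intro c hc
  rcases a with i | i <;> rcases b with j | j <;> rcases c with l | l <;>
    simp_all [lk, st, gkIndex] <;> omega

theorem gkIndex_lt_of_dominates (hk : 1 ≤ k) {a b : Fin (k + 1) ⊕ Fin (k + 1)}
    (h : Dominates (Gk k) a b) (hne : a ≠ b) : gkIndex b < gkIndex a := by
  by_contra! hle
  -- The neighbour of `b` outside `st a`: if `a, b` lie on the same side, the opposite vertex of
  -- index `k + 1 - i`; otherwise the vertex of index `0` (`1` if `i = 0`) on the side of `b`.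
  rcases a with j | j <;> rcases b with i | i <;>
    simp only [gkIndex, Sum.elim_inl, Sum.elim_inr, ne_eq, Sum.inl.injEq, Sum.inr.injEq] at hle hne
  · have := h.eq_or_adj (c := .inr ⟨k + 1 - i, by omega⟩) (by simp)
    simp at this; omega
  · by_cases hi : (i : ℕ) = 0
    · have := h.eq_or_adj (c := .inr ⟨1, by omega⟩) (by simp [Fin.ext_iff]; omega)
      simp at this; omega
    · have := h.eq_or_adj (c := .inr 0) (by simpa using hi)
      simp at this; omega
  · by_cases hi : (i : ℕ) = 0
    · have := h.eq_or_adj (c := .inl ⟨1, by omega⟩) (by simp [Fin.ext_iff]; omega)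
      simp at this; omega
    · have := h.eq_or_adj (c := .inl 0) (by simpa using hi)
      simp at this; omega
  · have := h.eq_or_adj (c := .inl ⟨k + 1 - i, by omega⟩) (by simp)
    simp at this; omega

theorem gkIndex_le (v : Fin (k + 1) ⊕ Fin (k + 1)) : gkIndex v ≤ k := by
  cases v <;> simp [gkIndex] <;> omega

theorem gk_exists_domChain (v : Fin (k + 1) ⊕ Fin (k + 1)) :
    ∃ l, IsDomChain (Gk k) l ∧ l.head? = some v ∧ l.length = gkIndex v + 1 := by
  set f : ℕ → Fin (k + 1) ⊕ Fin (k + 1) := fun t =>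
    v.map (fun _ => Fin.ofNat (k + 1) t) (fun _ => Fin.ofNat (k + 1) t)
  have hf : ∀ t ≤ k, gkIndex (f t) = t := fun t ht => by
    cases v <;> simp [f, gkIndex, Nat.mod_eq_of_lt (Nat.lt_succ_of_le ht)]
  have hfv : f (gkIndex v) = v := by cases v <;> simp [f, gkIndex]
  have hv := gkIndex_le v
  refine ⟨_, isDomChain_map_range (n := gkIndex v) (f := f) ?_ ?_,
    by simp [List.range_succ, hfv], by simp⟩
  · intro s hs t ht hst
    rw [← hf s (le_trans hs hv), ← hf t (le_trans ht hv), hst]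
  · intro t ht
    exact gk_dominates_of_isLeft_eq (by simp [f])
      (by rw [hf t (by omega), hf (t + 1) (by omega)]; omega)

theorem gk_vdepth (hk : 1 ≤ k) (v : Fin (k + 1) ⊕ Fin (k + 1)) :
    vdepth (Gk k) v = gkIndex v := by
  rw [vdepth, ssDepth_eq_zero_of_isClique_compl_st gk_isClique_compl_st, Nat.max_zero,
    domDepth_eq_of_rank gkIndex (fun _ _ => gkIndex_lt_of_dominates hk) (gk_exists_domChain v)]

theorem gk_gdepth (hk : 1 ≤ k) : gdepth (Gk k) = k := by
  refine IsGreatest.csSup_eq ⟨⟨.inl (Fin.last k), by simp [gk_vdepth hk, gkIndex]⟩, ?_⟩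
  rintro n ⟨v, rfl⟩
  exact (gk_vdepth hk v).trans_le (gkIndex_le v)

end Gk

/-- For `k ≥ 1`, the graph `Γ_k` contains no domination-equivalent
pair, no separating intersection of links, and `depth(Γ_k) = k`; indeed
`depth(x_i) = depth(y_i) = i` for each `i`. -/
theorem gk_no_domEquiv_no_sil_depth (k : ℕ) (hk : 1 ≤ k) :
    ¬ DomEquivPair (Gk k) ∧ ¬ SepIntLinks (Gk k) ∧ gdepth (Gk k) = k ∧
      ∀ i : Fin (k + 1),
        vdepth (Gk k) (Sum.inl i) = (i : ℕ) ∧ vdepth (Gk k) (Sum.inr i) = (i : ℕ) :=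
  ⟨not_domEquivPair_of_rank gkIndex (fun _ _ => gkIndex_lt_of_dominates hk),
    not_sepIntLinks_of_cliqueFree_compl gk_cliqueFree_compl, gk_gdepth hk,
    fun i => ⟨gk_vdepth hk (.inl i), gk_vdepth hk (.inr i)⟩⟩
end
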